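/- Under the Feshbach–Schur hypotheses: (i) if ψ ∈ ℋ satisfies ψ ≠ 0 and T ψ = 0, then P ψ ≠ 0 and F_P(T) (P ψ) = 0; (ii) conversely, if φ ∈ ℋ satisfies φ ≠ 0, P φ = φ and F_P(T) φ = 0, then the vector ψ := φ − S T φ satisfies ψ ≠ 0 and T ψ = 0. -/

import Mathlib

/-!
Write `Q = 1 - P`. The hypotheses on `S` say that `S = Q S Q` inverts `Q T Q` on the range of `Q`.
They give two factorizations of the Feshbach–Schur operator,
`F_P(T) = P (1 - T Q S Q) T`  and  `F_P(T) = T (1 - S T) P`.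
The first shows that `F_P(T)` kills `P ψ` whenever `T ψ = 0`; the second that `T` kills
`(1 - S T) φ` whenever `F_P(T)` kills `φ = P φ`. Nonvanishing holds because `Q T Q` is injective
on the range of `Q`, and because `P (1 - S T) φ = φ`.
-/

section FeshbachSchur

variable {A M : Type*} [Ring A] [AddCommGroup M] [Module A M] {P T S : A}

def feshbachSchur (P T S : A) : A :=
  P * T * P - P * T * (1 - P) * S * (1 - P) * T * P

theorem feshbachSchur_mul_proj (hP : IsIdempotentElem P) :
    feshbachSchur P T S * P = feshbachSchur P T S := by
  simp only [feshbachSchur, sub_mul, mul_assoc, hP.eq]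

theorem feshbachSchur_eq_proj_mul (hP : IsIdempotentElem P)
    (hS1 : S * ((1 - P) * T * (1 - P)) = 1 - P) :
    feshbachSchur P T S = P * (1 - T * (1 - P) * S * (1 - P)) * T := by
  have hcompl : P * T * (1 - P) * S * (1 - P) * T * (1 - P) = P * T * (1 - P) := by
    calc P * T * (1 - P) * S * (1 - P) * T * (1 - P)
        = P * T * (1 - P) * (S * ((1 - P) * T * (1 - P))) := by noncomm_ring
      _ = P * T * (1 - P) := by rw [hS1, mul_assoc, hP.one_sub.eq]
  calc feshbachSchur P T S
      = P * (1 - T * (1 - P) * S * (1 - P)) * T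
        - (P * T * (1 - P) - P * T * (1 - P) * S * (1 - P) * T * (1 - P)) := by
        simp only [feshbachSchur]; noncomm_ring
    _ = P * (1 - T * (1 - P) * S * (1 - P)) * T := by rw [hcompl, sub_self, sub_zero]

theorem mul_eq_zero_of_eq_one_sub_mul_mul_one_sub (hP : IsIdempotentElem P)
    (hS : S = (1 - P) * S * (1 - P)) : P * S = 0 := by
  rw [hS, ← mul_assoc, ← mul_assoc, hP.mul_one_sub_self, zero_mul, zero_mul]

theorem feshbachSchur_eq_mul_proj (hP : IsIdempotentElem P) (hS : S = (1 - P) * S * (1 - P))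
    (hS2 : ((1 - P) * T * (1 - P)) * S = 1 - P) :
    feshbachSchur P T S = T * (1 - S * T) * P := by
  have hQ := hP.one_sub
  have hQS : (1 - P) * S = S := by rw [hS, ← mul_assoc, ← mul_assoc, hQ.eq]
  have compl_part : (1 - P) * T * S = 1 - P := by
    calc (1 - P) * T * S = (1 - P) * T * ((1 - P) * S) := by rw [hQS]
      _ = 1 - P := by rw [← mul_assoc, hS2]
  have compl_zero : (1 - P) * T * (1 - S * T) = 0 := by
    rw [mul_sub, mul_one, ← mul_assoc, compl_part, sub_self]
  calc feshbachSchur P T S = P * T * P - P * T * ((1 - P) * S * (1 - P)) * T * P := by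
        simp only [feshbachSchur, mul_assoc]
    _ = P * T * P - P * T * S * T * P := by rw [← hS]
    _ = P * (T * (1 - S * T)) * P + (1 - P) * T * (1 - S * T) * P := by
        rw [compl_zero]; noncomm_ring
    _ = T * (1 - S * T) * P := by noncomm_ring

theorem eq_zero_of_smul_eq_zero_of_proj_smul_eq_zero (hS1 : S * ((1 - P) * T * (1 - P)) = 1 - P)
    {ψ : M} (hTψ : T • ψ = 0) (hPψ : P • ψ = 0) : ψ = 0 := by
  have hQψ : (1 - P) • ψ = ψ := by rw [sub_smul, one_smul, hPψ, sub_zero]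
  calc ψ = (S * ((1 - P) * T * (1 - P))) • ψ := by rw [hS1, hQψ]
    _ = 0 := by simp only [mul_smul, hQψ, hTψ, smul_zero]

theorem feshbachSchur_smul_proj_smul_eq_zero (hP : IsIdempotentElem P)
    (hS1 : S * ((1 - P) * T * (1 - P)) = 1 - P) {ψ : M} (hTψ : T • ψ = 0) :
    feshbachSchur P T S • P • ψ = 0 := by
  rw [← mul_smul, feshbachSchur_mul_proj hP, feshbachSchur_eq_proj_mul hP hS1, mul_smul, hTψ,
    smul_zero]

theorem proj_smul_sub_smul_smul (hP : IsIdempotentElem P) (hS : S = (1 - P) * S * (1 - P))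
    {φ : M} (hPφ : P • φ = φ) : P • (φ - S • T • φ) = φ := by
  rw [smul_sub, hPφ, ← mul_smul, mul_eq_zero_of_eq_one_sub_mul_mul_one_sub hP hS, zero_smul,
    sub_zero]

theorem smul_sub_smul_smul_eq_feshbachSchur_smul (hP : IsIdempotentElem P)
    (hS : S = (1 - P) * S * (1 - P)) (hS2 : ((1 - P) * T * (1 - P)) * S = 1 - P)
    {φ : M} (hPφ : P • φ = φ) : T • (φ - S • T • φ) = feshbachSchur P T S • φ := by
  rw [feshbachSchur_eq_mul_proj hP hS hS2, mul_smul, mul_smul, hPφ, sub_smul, one_smul, mul_smul]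

end FeshbachSchur

theorem feshbach_schur_eigenvector_correspondence_general
    {ℋ : Type*} [NormedAddCommGroup ℋ] [InnerProductSpace ℂ ℋ]
    (T P S : ℋ →L[ℂ] ℋ) (hP : P * P = P)
    (hS : S = (1 - P) * S * (1 - P))
    (hS1 : S * ((1 - P) * T * (1 - P)) = 1 - P)
    (hS2 : ((1 - P) * T * (1 - P)) * S = 1 - P) :
    (∀ ψ : ℋ, ψ ≠ 0 → T ψ = 0 →
      P ψ ≠ 0 ∧ (P * T * P - P * T * (1 - P) * S * (1 - P) * T * P) (P ψ) = 0) ∧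
    (∀ φ : ℋ, φ ≠ 0 → P φ = φ →
      (P * T * P - P * T * (1 - P) * S * (1 - P) * T * P) φ = 0 →
      φ - S (T φ) ≠ 0 ∧ T (φ - S (T φ)) = 0) := by
  refine ⟨fun ψ hψ hTψ => ⟨fun hPψ => hψ ?_, ?_⟩, fun φ hφ hPφ hFφ => ⟨fun hψ => hφ ?_, ?_⟩⟩
  · exact eq_zero_of_smul_eq_zero_of_proj_smul_eq_zero hS1 hTψ hPψ
  · exact feshbachSchur_smul_proj_smul_eq_zero hP hS1 hTψ
  · have hPψ : P (φ - S (T φ)) = φ := proj_smul_sub_smul_smul hP hS hPφ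
    rwa [hψ, map_zero, eq_comm] at hPψ
  · exact (smul_sub_smul_smul_eq_feshbachSchur_smul hP hS hS2 hPφ).trans hFφ

/-- **Eigenvector correspondence for the Feshbach–Schur map.** Under the
Feshbach–Schur hypotheses:
(i) if `ψ ≠ 0` and `T ψ = 0`, then `P ψ ≠ 0` and `F_P(T) (P ψ) = 0`;
(ii) conversely, if `φ ≠ 0`, `P φ = φ` and `F_P(T) φ = 0`, then
`ψ := φ − S T φ` satisfies `ψ ≠ 0` and `T ψ = 0`. -/
theorem feshbach_schur_eigenvector_correspondence
    {ℋ : Type*} [NormedAddCommGroup ℋ] [InnerProductSpace ℂ ℋ] [CompleteSpace ℋ]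
    (T P S : ℋ →L[ℂ] ℋ) (hP : P * P = P)
    (hS : S = (1 - P) * S * (1 - P))
    (hS1 : S * ((1 - P) * T * (1 - P)) = 1 - P)
    (hS2 : ((1 - P) * T * (1 - P)) * S = 1 - P) :
    (∀ ψ : ℋ, ψ ≠ 0 → T ψ = 0 →
      P ψ ≠ 0 ∧ (P * T * P - P * T * (1 - P) * S * (1 - P) * T * P) (P ψ) = 0) ∧
    (∀ φ : ℋ, φ ≠ 0 → P φ = φ →
      (P * T * P - P * T * (1 - P) * S * (1 - P) * T * P) φ = 0 →
      φ - S (T φ) ≠ 0 ∧ T (φ - S (T φ)) = 0) :=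
  feshbach_schur_eigenvector_correspondence_general T P S hP hS hS1 hS2
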